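/- arXiv:2601.18636 — 8 statements merged into one kernel-verified Lean document; each statement's English description precedes it below -/
import Mathlib

section
/- Let R be a commutative ring, let N ≥ 2 be an integer, and let x : ℤ → R be a sequence with x_{j+N} = x_j for all j ∈ ℤ. Define F : ℤ → R by F_j := 1 + Σ_{k=0}^{N-2} Π_{m=0}^{k} x_{j-m} (that is, F_j = 1 + x_j + x_j x_{j-1} + ⋯ + x_j x_{j-1} ⋯ x_{j-N+2}). Then for every j ∈ ℤ one has F_j + x_{j-1}·F_{j-2} = (1 + x_j)·F_{j-1}. (Key identity in the proof of Lemma 4.2.1.) -/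
/-- Key identity in the proof of Lemma 4.2.1: for an `N`-periodic sequence `x` in a
commutative ring and `F j = 1 + x j + x j * x (j-1) + ⋯ + x j ⋯ x (j-N+2)`,
one has `F j + x (j-1) * F (j-2) = (1 + x j) * F (j-1)`. -/
theorem stmt_0 (R : Type*) [CommRing R] (N : ℕ) (hN : 2 ≤ N) (x : ℤ → R)
    (hper : ∀ j : ℤ, x (j + N) = x j)
    (F : ℤ → R)
    (hF : ∀ j : ℤ, F j = 1 + ∑ k ∈ Finset.range (N - 1), ∏ m ∈ Finset.range (k + 1),
      x (j - (m : ℤ))) :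
    ∀ j : ℤ, F j + x (j - 1) * F (j - 2) = (1 + x j) * F (j - 1) := by
  obtain ⟨n, rfl⟩ : ∃ n, N = n + 1 := ⟨N - 1, by omega⟩
  have hn : (n + 1) - 1 = n := rfl
  -- Lemma A: x j * F (j-1) = F j - 1 + ∏_{m<n+1} x (j - m)
  have hA : ∀ j : ℤ, x j * F (j - 1) =
      F j - 1 + ∏ m ∈ Finset.range (n + 1), x (j - (m : ℤ)) := by
    intro j
    rw [hF j, hF (j - 1), hn]
    have h1 : (1 : R) + ∑ k ∈ Finset.range n, ∏ m ∈ Finset.range (k + 1),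
        x (j - (m : ℤ)) - 1 + ∏ m ∈ Finset.range (n + 1), x (j - (m : ℤ)) =
        ∑ k ∈ Finset.range (n + 1), ∏ m ∈ Finset.range (k + 1), x (j - (m : ℤ)) := by
      rw [Finset.sum_range_succ]; ring
    rw [h1, Finset.sum_range_succ']
    have h2 : ∀ k, (∏ m ∈ Finset.range (k + 1 + 1), x (j - (m : ℤ))) =
        x j * ∏ m ∈ Finset.range (k + 1), x (j - 1 - (m : ℤ)) := by
      intro k
      rw [Finset.prod_range_succ']
      simp only [Nat.cast_add, Nat.cast_one, Nat.cast_zero, sub_zero]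
      rw [mul_comm]
      congr 1
      apply Finset.prod_congr rfl
      intro m _
      ring_nf
    simp only [h2]
    rw [mul_add, mul_one, Finset.mul_sum]
    simp [add_comm]
  have hG : ∀ j : ℤ, (∏ m ∈ Finset.range (n + 1), x (j - (m : ℤ))) =
      ∏ m ∈ Finset.range (n + 1), x (j - 1 - (m : ℤ)) := by
    intro j
    rw [Finset.prod_range_succ', Finset.prod_range_succ]
    have hx : x (j - 1 - (n : ℤ)) = x j := by
      have := hper (j - 1 - n)
      push_cast at this
      rw [← this]; congr 1; ring
    rw [hx]
    simp only [Nat.cast_zero, sub_zero]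
    congr 1
    apply Finset.prod_congr rfl
    intro m _
    congr 1
    push_cast
    ring
  intro j
  have a1 := hA j
  have a2 := hA (j - 1)
  have g := hG j
  have e2 : (j : ℤ) - 1 - 1 = j - 2 := by ring
  rw [e2] at a2
  rw [add_mul, one_mul, a1]
  rw [g]
  linear_combination a2
end

section
/- Let K be a field, let N ≥ 2 be an integer, and let x : ℤ → K be a sequence with x_{j+N} = x_j and x_j ≠ 0 for all j ∈ ℤ. Define F : ℤ → K by F_j := 1 + Σ_{k=0}^{N-2} Π_{m=0}^{k} x_{j-m}, and assume F_j ≠ 0 for all j. Setting Y_j := x_j · F_{j-1} / F_j, one has for every j ∈ ℤ: 1/Y_j + Y_{j-1}/x_j = 1 + 1/x_j. (Lemma 4.2.1.) -/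
/-!
Peeling off the first factor of each product gives `F j - x j * F (j - 1) = 1 - P j`, where
`P j` is the product of `x` over the `N` consecutive indices ending at `j`. By periodicity `P`
is constant, so `F j + x (j - 1) * F (j - 2) = (1 + x j) * F (j - 1)`, and clearing
denominators turns the claimed identity into exactly this three-term recurrence.
-/

open Finset

theorem Finset.prod_range_comp_succ_of_eq {M : Type*} [CommMonoid M] (f : ℕ → M) {n : ℕ}
    (h : f n = f 0) : ∏ m ∈ range n, f (m + 1) = ∏ m ∈ range n, f m := by
  cases n with
  | zero => simp
  | succ n => rw [prod_range_succ, prod_range_succ' f, h]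

section Shifts

variable {M : Type*} [CommMonoid M] (x : ℤ → M)

theorem mul_prod_range_pred_sub (j : ℤ) (n : ℕ) :
    x j * ∏ m ∈ range n, x (j - 1 - m) = ∏ m ∈ range (n + 1), x (j - m) := by
  rw [prod_range_succ', mul_comm]
  push_cast
  simp only [sub_zero, sub_add_eq_sub_sub_swap]

theorem prod_range_pred_sub_of_periodic {n : ℕ} (hper : ∀ j : ℤ, x (j + n) = x j) (j : ℤ) :
    ∏ m ∈ range n, x (j - 1 - m) = ∏ m ∈ range n, x (j - m) := by
  have hn : x (j - n) = x (j - 0) := by simpa using (hper (j - n)).symm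
  simpa [sub_add_eq_sub_sub_swap] using
    prod_range_comp_succ_of_eq (fun m : ℕ => x (j - m)) hn

end Shifts

theorem one_add_sum_prod_sub_mul {R : Type*} [CommRing R] (x : ℤ → R) (n : ℕ) (j : ℤ) :
    (1 + ∑ k ∈ range n, ∏ m ∈ range (k + 1), x (j - m))
      - x j * (1 + ∑ k ∈ range n, ∏ m ∈ range (k + 1), x (j - 1 - m))
      = 1 - ∏ m ∈ range (n + 1), x (j - m) := by
  induction n with
  | zero => simp
  | succ n ih =>
    rw [sum_range_succ, sum_range_succ, ← mul_prod_range_pred_sub x j (n + 1)]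
    linear_combination ih

/-- Lemma 4.2.1: with `Y j = x j * F (j-1) / F j`, one has
`1 / Y j + Y (j-1) / x j = 1 + 1 / x j`. -/
theorem stmt_1 (K : Type*) [Field K] (N : ℕ) (hN : 2 ≤ N) (x : ℤ → K)
    (hper : ∀ j : ℤ, x (j + N) = x j) (hx : ∀ j : ℤ, x j ≠ 0)
    (F : ℤ → K)
    (hF : ∀ j : ℤ, F j = 1 + ∑ k ∈ Finset.range (N - 1), ∏ m ∈ Finset.range (k + 1),
      x (j - (m : ℤ)))
    (hFne : ∀ j : ℤ, F j ≠ 0)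
    (Y : ℤ → K) (hY : ∀ j : ℤ, Y j = x j * F (j - 1) / F j) :
    ∀ j : ℤ, 1 / Y j + Y (j - 1) / x j = 1 + 1 / x j := by
  obtain ⟨n, rfl⟩ := Nat.exists_eq_add_of_le' (one_le_two.trans hN)
  have hdiff (j : ℤ) : F j - x j * F (j - 1) = 1 - ∏ m ∈ range (n + 1), x (j - m) := by
    simpa only [hF, Nat.add_sub_cancel, sub_sub] using one_add_sum_prod_sub_mul x n j
  have hrec (j : ℤ) : F j + x (j - 1) * F (j - 1 - 1) = (1 + x j) * F (j - 1) := by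
    linear_combination hdiff j - hdiff (j - 1) + prod_range_pred_sub_of_periodic x hper j
  intro j
  have := hx j; have := hx (j - 1); have := hFne j; have := hFne (j - 1); have := hFne (j - 1 - 1)
  rw [hY j, hY (j - 1)]
  field_simp
  linear_combination hrec j
end

section
/- For positive real numbers a, b, c, d, the trace of the matrix product L(a)·R(b)·R(c)·L(d) equals √(abcd) + √(acd/b) + √(ad/(bc)) + √(cd/(ab)) + √(d/(abc)) + 1/√(abcd). (Equation (6.8): the trace of the monodromy ρ(g₅) = L(X₁,₄)R(X₂,₁)R(X₁,₂)L(X₂,₂) equals the formal geodesic function 𝔸₂,₄ of the 𝒜₄-groupoid, with a = X₁,₄, b = X₂,₁, c = X₁,₂, d = X₂,₂.) -/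
/-- The left-turn transport matrix `L(t)`. -/
noncomputable def Lmat (t : ℝ) : Matrix (Fin 2) (Fin 2) ℝ :=
  !![Real.sqrt t, Real.sqrt t; 0, (Real.sqrt t)⁻¹]

/-- The right-turn transport matrix `R(t)`. -/
noncomputable def Rmat (t : ℝ) : Matrix (Fin 2) (Fin 2) ℝ :=
  !![Real.sqrt t, 0; (Real.sqrt t)⁻¹, (Real.sqrt t)⁻¹]

/-! After substituting `x = √a`, `y = √b`, `z = √c`, `w = √d` the trace is a Laurent polynomial
in `x, y, z, w`, and each of its six monomials is the square root of one of the six terms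
on the right-hand side. -/

theorem Matrix.trace_left_right_right_left {K : Type*} [Field K] {x y z w : K}
    (hx : x ≠ 0) (hy : y ≠ 0) (hz : z ≠ 0) (hw : w ≠ 0) :
    (!![x, x; 0, x⁻¹] * !![y, 0; y⁻¹, y⁻¹] * !![z, 0; z⁻¹, z⁻¹] * !![w, w; 0, w⁻¹]).trace =
      x * y * z * w + x * z * w / y + x * w / (y * z) + z * w / (x * y) + w / (x * y * z)
        + 1 / (x * y * z * w) := by
  simp only [Matrix.mul_fin_two, Matrix.trace_fin_two_of]
  field_simp
  ring

/-- Equation (6.8): the trace of the monodromy `ρ(g₅) = L(a)R(b)R(c)L(d)` equals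
the formal geodesic function `𝔸₂,₄`. -/
theorem stmt_8 (a b c d : ℝ) (ha : 0 < a) (hb : 0 < b) (hc : 0 < c) (hd : 0 < d) :
    (Lmat a * Rmat b * Rmat c * Lmat d).trace =
      Real.sqrt (a * b * c * d) + Real.sqrt (a * c * d / b) + Real.sqrt (a * d / (b * c))
        + Real.sqrt (c * d / (a * b)) + Real.sqrt (d / (a * b * c))
        + 1 / Real.sqrt (a * b * c * d) := by
  rw [Lmat, Lmat, Rmat, Rmat, Matrix.trace_left_right_right_left (Real.sqrt_ne_zero'.2 ha)
    (Real.sqrt_ne_zero'.2 hb) (Real.sqrt_ne_zero'.2 hc) (Real.sqrt_ne_zero'.2 hd)]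
  simp (disch := positivity) only [Real.sqrt_div', Real.sqrt_mul']
end

section
/- For positive real numbers a, b, c, d, p, set G₃ := L(p)·L(b)·R(d) and G₄ := R(p)·L(a)·L(c). Then the trace of G₃·G₄^{-1} equals √(abcd) + √(abd/c) + √(ab/(cd)) + √(bd/(ac)) + √(b/(acd)) + 1/√(abcd); in particular it is independent of p. (Equation (6.8): Tr(ρ(g₃)ρ(g₄)^{-1}) = 𝔸₁,₃ on the twice-punctured torus, with a = X₁,₁, b = X₂,₁, c = X₂,₂, d = X₁,₃, p = X₁,₄.) -/
/-- Equation (6.8): `Tr(ρ(g₃)ρ(g₄)⁻¹) = 𝔸₁,₃` on the twice-punctured torus;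
in particular the value is independent of `p`. -/
theorem stmt_9 (a b c d p : ℝ) (ha : 0 < a) (hb : 0 < b) (hc : 0 < c) (hd : 0 < d)
    (hp : 0 < p) :
    ((Lmat p * Lmat b * Rmat d) * (Rmat p * Lmat a * Lmat c)⁻¹).trace =
      Real.sqrt (a * b * c * d) + Real.sqrt (a * b * d / c) + Real.sqrt (a * b / (c * d))
        + Real.sqrt (b * d / (a * c)) + Real.sqrt (b / (a * c * d))
        + 1 / Real.sqrt (a * b * c * d) := by
  obtain ⟨x, hx, rfl⟩ : ∃ x, 0 < x ∧ a = x ^ 2 :=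
    ⟨Real.sqrt a, Real.sqrt_pos.2 ha, (Real.sq_sqrt ha.le).symm⟩
  obtain ⟨y, hy, rfl⟩ : ∃ y, 0 < y ∧ b = y ^ 2 :=
    ⟨Real.sqrt b, Real.sqrt_pos.2 hb, (Real.sq_sqrt hb.le).symm⟩
  obtain ⟨z, hz, rfl⟩ : ∃ z, 0 < z ∧ c = z ^ 2 :=
    ⟨Real.sqrt c, Real.sqrt_pos.2 hc, (Real.sq_sqrt hc.le).symm⟩
  obtain ⟨w, hw, rfl⟩ : ∃ w, 0 < w ∧ d = w ^ 2 :=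
    ⟨Real.sqrt d, Real.sqrt_pos.2 hd, (Real.sq_sqrt hd.le).symm⟩
  obtain ⟨q, hq, rfl⟩ : ∃ q, 0 < q ∧ p = q ^ 2 :=
    ⟨Real.sqrt p, Real.sqrt_pos.2 hp, (Real.sq_sqrt hp.le).symm⟩
  have hx' := hx.ne'
  have hy' := hy.ne'
  have hz' := hz.ne'
  have hw' := hw.ne'
  have hq' := hq.ne'
  have hG : (Rmat (q ^ 2) * Lmat (x ^ 2) * Lmat (z ^ 2))⁻¹ =
      !![x * z / q + x / (q * z) + 1 / (q * x * z), -(q * x * z + q * x / z);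
         -(x * z / q), q * x * z] := by
    apply Matrix.inv_eq_right_inv
    simp only [Rmat, Lmat, Real.sqrt_sq hx.le, Real.sqrt_sq hz.le, Real.sqrt_sq hq.le,
      Matrix.mul_fin_two, Matrix.one_fin_two]
    ext i j
    fin_cases i <;> fin_cases j <;> simp <;> field_simp <;> ring
  rw [hG]
  rw [show x ^ 2 * y ^ 2 * z ^ 2 * w ^ 2 = (x * y * z * w) ^ 2 by ring,
    show x ^ 2 * y ^ 2 * w ^ 2 / z ^ 2 = (x * y * w / z) ^ 2 by ring,
    show x ^ 2 * y ^ 2 / (z ^ 2 * w ^ 2) = (x * y / (z * w)) ^ 2 by ring,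
    show y ^ 2 * w ^ 2 / (x ^ 2 * z ^ 2) = (y * w / (x * z)) ^ 2 by ring,
    show y ^ 2 / (x ^ 2 * z ^ 2 * w ^ 2) = (y / (x * z * w)) ^ 2 by ring,
    Real.sqrt_sq (by positivity), Real.sqrt_sq (by positivity),
    Real.sqrt_sq (by positivity), Real.sqrt_sq (by positivity),
    Real.sqrt_sq (by positivity)]
  simp only [Lmat, Rmat, Real.sqrt_sq hy.le, Real.sqrt_sq hw.le, Real.sqrt_sq hq.le,
    Matrix.mul_fin_two, Matrix.trace_fin_two_of]
  field_simp
  ring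
end

section
/- Let X₁,₁, X₁,₂, X₁,₃, X₁,₄, X₂,₁, X₂,₂ be positive real numbers, and set ρ₃ := L(X₁,₄)·L(X₂,₁)·R(X₁,₃), ρ₄ := R(X₁,₄)·L(X₁,₁)·L(X₂,₂), ρ₅ := L(X₁,₄)·R(X₂,₁)·R(X₁,₂)·L(X₂,₂). Let 𝒦₁ := X₁,₁X₁,₂X₁,₃X₁,₄X₂,₁X₂,₂ and 𝒦₂ := X₂,₁X₂,₂. Then Tr(ρ₃·ρ₄·ρ₅^{-1}) = −√(𝒦₁/𝒦₂)·(1 + 𝒦₂/𝒦₁). (Equation (6.9): the trace of the monodromy around one puncture of the twice-punctured torus is expressed through the Casimirs 𝒦₁, 𝒦₂ of the 𝒜₄-quiver.) -/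
/-!
Everything is a Laurent polynomial in the square roots `√X`: inverting the unimodular
factors of `ρ₅` explicitly, the trace of `ρ₃ ρ₄ ρ₅⁻¹` collapses to `-(m + m⁻¹)` with
`m = √X₁₁ √X₁₂ √X₁₃ √X₁₄ = √(𝒦₁/𝒦₂)`, which is the right-hand side since `𝒦₂/𝒦₁ = m⁻²`.
-/

open Matrix Real

lemma Lmat_inv {t : ℝ} (ht : 0 < t) : (Lmat t)⁻¹ = !![(√t)⁻¹, -√t; 0, √t] := by
  have hs : √t ≠ 0 := (sqrt_pos.mpr ht).ne'
  refine inv_eq_left_inv ?_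
  simp [Lmat, one_fin_two, hs]

lemma Rmat_inv {t : ℝ} (ht : 0 < t) : (Rmat t)⁻¹ = !![(√t)⁻¹, 0; -(√t)⁻¹, √t] := by
  have hs : √t ≠ 0 := (sqrt_pos.mpr ht).ne'
  refine inv_eq_left_inv ?_
  simp [Rmat, one_fin_two, hs]

lemma neg_sqrt_div_mul_one_add_div {u k : ℝ} (hu : 0 < u) (hk : 0 < k) :
    -√(u * k / k) * (1 + k / (u * k)) = -(√u + (√u)⁻¹) := by
  have hs : √u ≠ 0 := (sqrt_pos.mpr hu).ne'
  rw [mul_div_cancel_right₀ u hk.ne', div_mul_cancel_right₀ hk.ne', ← sq_sqrt hu.le,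
    sqrt_sq (sqrt_nonneg u)]
  field_simp

/-- Equation (6.9): the trace of the monodromy around one puncture of the
twice-punctured torus is `−√(𝒦₁/𝒦₂)(1 + 𝒦₂/𝒦₁)` where `𝒦₁, 𝒦₂` are the Casimirs
of the `𝒜₄`-quiver. -/
theorem stmt_10 (X11 X12 X13 X14 X21 X22 : ℝ)
    (h11 : 0 < X11) (h12 : 0 < X12) (h13 : 0 < X13) (h14 : 0 < X14)
    (h21 : 0 < X21) (h22 : 0 < X22) :
    let ρ3 := Lmat X14 * Lmat X21 * Rmat X13
    let ρ4 := Rmat X14 * Lmat X11 * Lmat X22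
    let ρ5 := Lmat X14 * Rmat X21 * Rmat X12 * Lmat X22
    let K1 := X11 * X12 * X13 * X14 * X21 * X22
    let K2 := X21 * X22
    (ρ3 * ρ4 * ρ5⁻¹).trace = -Real.sqrt (K1 / K2) * (1 + K2 / K1) := by
  intro ρ3 ρ4 ρ5 K1 K2
  have hK1 : K1 = X11 * X12 * X13 * X14 * K2 := by ring
  rw [hK1, neg_sqrt_div_mul_one_add_div (by positivity) (by positivity),
    sqrt_mul (by positivity), sqrt_mul (by positivity), sqrt_mul (by positivity)]
  simp only [ρ3, ρ4, ρ5, Matrix.mul_inv_rev, Lmat_inv, Rmat_inv, h12, h14, h21, h22]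
  obtain ⟨_, _, _, _, _, _⟩ :
      √X11 ≠ 0 ∧ √X12 ≠ 0 ∧ √X13 ≠ 0 ∧ √X14 ≠ 0 ∧ √X21 ≠ 0 ∧ √X22 ≠ 0 := by
    refine ⟨?_, ?_, ?_, ?_, ?_, ?_⟩ <;> positivity
  simp only [Lmat, Rmat, mul_fin_two, trace_fin_two_of]
  field_simp
  ring
end

section
/- Let x, y, z be positive real numbers and define P := x²y²z² + x²yz² + 2x²yz + x²y + 2xy + y + 1, Q := x²y²z² + x²y²z + 2xy²z + y²z + 2yz + z + 1, R := x²y²z² + xy²z² + 2xyz² + xz² + 2xz + x + 1, and set X := P²/(xQ²), Y := Q²/(yR²), Z := R²/(zP²). Then, with ⟨a,b⟩ := √(ab)·(1 + 1/a + 1/(ab)) for a, b > 0, one has ⟨X,Y⟩ = ⟨x,y⟩, ⟨Y,Z⟩ = ⟨y,z⟩, and ⟨Z,X⟩ = ⟨z,x⟩. (The explicit birational Weyl reflection s₁* on the 𝒜₃-quiver preserves the elementary formal geodesic functions; see Theorem 4.2.2 and the remark following it.) -/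
/-!
For positive `a, b` one has `⟨a,b⟩ = (ab + b + 1)/√(ab)`. If `X = p²/(a q²)` and `Y = q²/(b r²)`,
then `√(XY) = p/(r√(ab))`, so `⟨X,Y⟩ = ⟨a,b⟩` reduces to the single quadratic relation
`p² + a q² + ab r² = (ab + b + 1) p r`. The three polynomials `P, Q, R` are cyclic rotations of
one polynomial in `(x, y, z)`, and for `(p, q, r) = (P, Q, R)` this relation is a polynomial
identity; rotating it gives the other two equalities.
-/

/-- The elementary formal geodesic function of the `𝒜₃`-quiver:
`⟨a,b⟩ = √(ab)·(1 + 1/a + 1/(ab))`. -/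
noncomputable def brkt (a b : ℝ) : ℝ := Real.sqrt (a * b) * (1 + 1 / a + 1 / (a * b))

theorem brkt_eq_div_sqrt {a b : ℝ} (ha : 0 < a) (hb : 0 < b) :
    brkt a b = (a * b + b + 1) / Real.sqrt (a * b) := by
  have hs : Real.sqrt (a * b) ^ 2 = a * b := Real.sq_sqrt (by positivity)
  have hs_pos : 0 < Real.sqrt (a * b) := Real.sqrt_pos.2 (by positivity)
  unfold brkt
  field_simp
  linear_combination hs

theorem brkt_div_sq_eq_of_relation {a b p q r : ℝ} (ha : 0 < a) (hb : 0 < b)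
    (hp : 0 < p) (hq : 0 < q) (hr : 0 < r)
    (h : p ^ 2 + a * q ^ 2 + a * b * r ^ 2 = (a * b + b + 1) * p * r) :
    brkt (p ^ 2 / (a * q ^ 2)) (q ^ 2 / (b * r ^ 2)) = brkt a b := by
  set s := Real.sqrt (a * b) with hs_def
  have hs : s ^ 2 = a * b := Real.sq_sqrt (by positivity)
  have hs_pos : 0 < s := Real.sqrt_pos.2 (by positivity)
  have hXY : p ^ 2 / (a * q ^ 2) * (q ^ 2 / (b * r ^ 2)) = (p / (r * s)) ^ 2 := by
    field_simp
    linear_combination hs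
  rw [brkt_eq_div_sqrt ha hb, brkt_eq_div_sqrt (by positivity) (by positivity), hXY,
    Real.sqrt_sq (by positivity), ← hs_def]
  field_simp
  linear_combination b * h + (q ^ 2 + b * r ^ 2) * hs

/-- `P = weylPoly x y z`, `Q = weylPoly y z x` and `R = weylPoly z x y`. -/
def weylPoly (x y z : ℝ) : ℝ :=
  x^2*y^2*z^2 + x^2*y*z^2 + 2*x^2*y*z + x^2*y + 2*x*y + y + 1

theorem weylPoly_pos {x y z : ℝ} (hx : 0 < x) (hy : 0 < y) (hz : 0 < z) :
    0 < weylPoly x y z := by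
  unfold weylPoly
  positivity

theorem weylPoly_relation (x y z : ℝ) :
    weylPoly x y z ^ 2 + x * weylPoly y z x ^ 2 + x * y * weylPoly z x y ^ 2 =
      (x * y + y + 1) * weylPoly x y z * weylPoly z x y := by
  unfold weylPoly
  ring

theorem brkt_weylPoly {x y z : ℝ} (hx : 0 < x) (hy : 0 < y) (hz : 0 < z) :
    brkt (weylPoly x y z ^ 2 / (x * weylPoly y z x ^ 2))
      (weylPoly y z x ^ 2 / (y * weylPoly z x y ^ 2)) = brkt x y :=
  brkt_div_sq_eq_of_relation hx hy (weylPoly_pos hx hy hz) (weylPoly_pos hy hz hx)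
    (weylPoly_pos hz hx hy) (weylPoly_relation x y z)

/-- The explicit birational Weyl reflection `s₁*` on the `𝒜₃`-quiver preserves the
elementary formal geodesic functions (Theorem 4.2.2 and the remark following it). -/
theorem stmt_11 (x y z : ℝ) (hx : 0 < x) (hy : 0 < y) (hz : 0 < z) :
    let P := x^2*y^2*z^2 + x^2*y*z^2 + 2*x^2*y*z + x^2*y + 2*x*y + y + 1
    let Q := x^2*y^2*z^2 + x^2*y^2*z + 2*x*y^2*z + y^2*z + 2*y*z + z + 1
    let R := x^2*y^2*z^2 + x*y^2*z^2 + 2*x*y*z^2 + x*z^2 + 2*x*z + x + 1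
    let X := P^2 / (x * Q^2)
    let Y := Q^2 / (y * R^2)
    let Z := R^2 / (z * P^2)
    brkt X Y = brkt x y ∧ brkt Y Z = brkt y z ∧ brkt Z X = brkt z x := by
  have hQ : weylPoly y z x = x^2*y^2*z^2 + x^2*y^2*z + 2*x*y^2*z + y^2*z + 2*y*z + z + 1 := by
    unfold weylPoly; ring
  have hR : weylPoly z x y = x^2*y^2*z^2 + x*y^2*z^2 + 2*x*y*z^2 + x*z^2 + 2*x*z + x + 1 := by
    unfold weylPoly; ring
  have hP : weylPoly x y z = x^2*y^2*z^2 + x^2*y*z^2 + 2*x^2*y*z + x^2*y + 2*x*y + y + 1 := rfl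
  intro P Q R X Y Z
  refine ⟨?_, ?_, ?_⟩
  · simpa only [hP, hQ, hR] using brkt_weylPoly hx hy hz
  · simpa only [hP, hQ, hR] using brkt_weylPoly hy hz hx
  · simpa only [hP, hQ, hR] using brkt_weylPoly hz hx hy
end

section
/- Define quiver mutation in direction k on skew-symmetric integer matrices by μ_k(ε)_{ij} = −ε_{ij} if i = k or j = k, and μ_k(ε)_{ij} = ε_{ij} + (|ε_{ik}|·ε_{kj} + ε_{ik}·|ε_{kj}|)/2 otherwise. Let ε be the 5×5 skew-symmetric integer matrix with rows (indexed 1,…,5): (0,1,1,−1,−1), (−1,0,1,1,−1), (−1,−1,0,1,1), (1,−1,−1,0,1), (1,1,−1,−1,0) — the exchange matrix of the innermost cycle of the 𝒜₅-quiver. Then the matrix ε' := μ₂(μ₁(μ₄(ε))) satisfies ε'₃₄ = −2, ε'₃₅ = 2, ε'₄₃ = 2, ε'₄₅ = −2, ε'₅₃ = −2, ε'₅₄ = 2; that is, the principal submatrix of ε' on indices {3,4,5} is the exchange matrix of the Markov quiver. (Example 6.3.6, the key computation in the proof of Theorem 6.3.7 for n = 5.) -/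
/-- Quiver mutation in direction `k` on skew-symmetric integer matrices. -/
def quiverMut {n : ℕ} (k : Fin n) (ε : Matrix (Fin n) (Fin n) ℤ) : Matrix (Fin n) (Fin n) ℤ :=
  Matrix.of fun i j =>
    if i = k ∨ j = k then -ε i j
    else ε i j + (|ε i k| * ε k j + ε i k * |ε k j|) / 2

/-- Example 6.3.6: mutating the innermost cycle of the `𝒜₅`-quiver at the vertices
4, 1, 2 produces a quiver whose full subquiver on vertices {3,4,5} is the Markov
quiver (the key computation in the proof of Theorem 6.3.7 for `n = 5`).
Indices here are 0-based: vertex `i` of the paper is index `i-1`. -/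
theorem stmt_13 :
    let ε : Matrix (Fin 5) (Fin 5) ℤ :=
      !![0, 1, 1, -1, -1;
         -1, 0, 1, 1, -1;
         -1, -1, 0, 1, 1;
         1, -1, -1, 0, 1;
         1, 1, -1, -1, 0]
    let ε' := quiverMut 1 (quiverMut 0 (quiverMut 3 ε))
    ε' 2 3 = -2 ∧ ε' 2 4 = 2 ∧ ε' 3 2 = 2 ∧ ε' 3 4 = -2 ∧ ε' 4 2 = -2 ∧ ε' 4 3 = 2 := by
  refine ⟨by decide, by decide, by decide, by decide, by decide, by decide⟩
end

section
/- Let G be a commutative group, let m ≥ 2 be an integer, and define the map T from m-tuples (c₁,…,c_m) of elements of G to m-tuples by: (Tc)₁ := (c_m · Π_{j=1}^{m} c_j)^{-1}, (Tc)_i := c_{i-1} for 2 ≤ i ≤ m−1, and (Tc)_m := c_m·c_{m-1}. Then the m-fold iterate satisfies (T^m c)_i = c_i^{-1} for every i ∈ {1,…,m}. (The computational core of Lemma 6.3.2: the cluster transformation w = τ₁τ₂⋯τ_m acts on the Casimirs 𝒞₁,…,𝒞_m of the 𝒜₂ₘ-quiver by these monomial substitutions, and w^m inverts every Casimir.) 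-/
section Aux
variable {G : Type*} [CommGroup G]

def auxQ (n : ℕ) (c : Fin (n + 2) → G) (k : ℕ) : G :=
  ∏ j : Fin (n + 2), if n + 1 - k ≤ (j : ℕ) then c j else 1

theorem auxQ_zero (n : ℕ) (c : Fin (n + 2) → G) :
    auxQ n c 0 = c ⟨n + 1, by omega⟩ := by
  unfold auxQ
  have h : ∀ j : Fin (n + 2),
      (if n + 1 - 0 ≤ (j : ℕ) then c j else 1)
        = if j = (⟨n + 1, by omega⟩ : Fin (n + 2)) then c j else 1 := by
    intro j
    have hj := j.isLt
    by_cases h : (j : ℕ) = n + 1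
    · rw [if_pos (by omega), if_pos (Fin.ext h)]
    · rw [if_neg (by omega), if_neg (by simpa [Fin.ext_iff] using h)]
  rw [Finset.prod_congr rfl fun j _ => h j, Finset.prod_ite_eq']
  simp

theorem auxQ_succ (n : ℕ) (c : Fin (n + 2) → G) (k : ℕ) (hk : k ≤ n) :
    auxQ n c (k + 1) = auxQ n c k * c ⟨n - k, by omega⟩ := by
  unfold auxQ
  have h : ∀ j : Fin (n + 2),
      (if n + 1 - (k + 1) ≤ (j : ℕ) then c j else 1)
        = (if n + 1 - k ≤ (j : ℕ) then c j else 1)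
          * (if j = (⟨n - k, by omega⟩ : Fin (n + 2)) then c j else 1) := by
    intro j
    have hj := j.isLt
    by_cases h1 : (j : ℕ) = n - k
    · rw [if_pos (by omega), if_neg (by omega), if_pos (Fin.ext h1), one_mul]
    · by_cases h2 : n + 1 - k ≤ (j : ℕ)
      · rw [if_pos (by omega), if_pos h2, if_neg (by simpa [Fin.ext_iff] using h1), mul_one]
      · rw [if_neg (by omega), if_neg h2, if_neg (by simpa [Fin.ext_iff] using h1), one_mul]
  rw [Finset.prod_congr rfl fun j _ => h j, Finset.prod_mul_distrib, Finset.prod_ite_eq']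
  simp

theorem auxQ_top (n : ℕ) (c : Fin (n + 2) → G) :
    auxQ n c (n + 1) = ∏ j, c j := by
  unfold auxQ
  simp

theorem aux_prodT (n : ℕ) (T : (Fin (n + 2) → G) → (Fin (n + 2) → G))
    (hT1 : ∀ c : Fin (n + 2) → G, ∀ i : Fin (n + 2), (i : ℕ) = 0 →
      T c i = (c ⟨n + 1, by omega⟩ * ∏ j, c j)⁻¹)
    (hT2 : ∀ c : Fin (n + 2) → G, ∀ i : Fin (n + 2), 1 ≤ (i : ℕ) → (i : ℕ) ≤ n →
      T c i = c ⟨(i : ℕ) - 1, by omega⟩)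
    (hT3 : ∀ c : Fin (n + 2) → G, ∀ i : Fin (n + 2), (i : ℕ) = n + 1 →
      T c i = c i * c ⟨n, by omega⟩)
    (c : Fin (n + 2) → G) :
    ∏ j, T c j = (c ⟨n + 1, by omega⟩)⁻¹ := by
  set f : ℕ → G := fun j => if h : j < n + 2 then c ⟨j, h⟩ else 1 with hf
  set g : ℕ → G := fun j =>
    if j = 0 then (c ⟨n + 1, by omega⟩ * ∏ j, c j)⁻¹
    else if j = n + 1 then c ⟨n + 1, by omega⟩ * c ⟨n, by omega⟩
    else f (j - 1) with hg
  have h1 : ∏ j, T c j = ∏ j ∈ Finset.range (n + 2), g j := by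
    rw [← Fin.prod_univ_eq_prod_range]
    refine Finset.prod_congr rfl fun j _ => ?_
    have hj := j.isLt
    by_cases h0 : (j : ℕ) = 0
    · rw [hT1 c j h0, hg]; simp [h0]
    · by_cases htop : (j : ℕ) = n + 1
      · rw [hT3 c j htop, hg]
        simp only [htop, if_neg (by omega : ¬ n + 1 = 0), if_pos rfl]
        congr 1
        exact congrArg c (Fin.ext htop)
      · rw [hT2 c j (by omega) (by omega), hg]
        simp only [if_neg h0, if_neg htop, hf]
        rw [dif_pos (by omega)]
  have hcf : (∏ j, c j) = ∏ j ∈ Finset.range (n + 2), f j := by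
    rw [← Fin.prod_univ_eq_prod_range]
    refine Finset.prod_congr rfl fun j _ => ?_
    simp only [hf]
    rw [dif_pos j.isLt]
  have hP : (∏ j, c j) = (∏ j ∈ Finset.range n, f j) * f n * f (n + 1) := by
    rw [hcf, Finset.prod_range_succ, Finset.prod_range_succ]
  have h2 : ∏ j ∈ Finset.range (n + 2), g j
      = (∏ i ∈ Finset.range n, g (i + 1)) * g (n + 1) * g 0 := by
    rw [Finset.prod_range_succ']
    rw [Finset.prod_range_succ]
  have h3 : ∀ i ∈ Finset.range n, g (i + 1) = f i := by
    intro i hi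
    have hi' := Finset.mem_range.mp hi
    rw [hg]
    simp only [if_neg (by omega : ¬ i + 1 = 0), if_neg (by omega : ¬ i + 1 = n + 1)]
    congr 1
  have hfn : f n = c ⟨n, by omega⟩ := by rw [hf]; exact dif_pos (by omega)
  have hfn1 : f (n + 1) = c ⟨n + 1, by omega⟩ := by rw [hf]; exact dif_pos (by omega)
  rw [h1, h2, Finset.prod_congr rfl h3]
  have hg0 : g 0 = (c ⟨n + 1, by omega⟩ * ∏ j, c j)⁻¹ := by simp [hg]
  have hgn1 : g (n + 1) = c ⟨n + 1, by omega⟩ * c ⟨n, by omega⟩ := by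
    simp [hg]
  rw [hg0, hgn1, hP, hfn, hfn1]
  set A := ∏ j ∈ Finset.range n, f j
  set B := c (⟨n, by omega⟩ : Fin (n + 2))
  set C := c (⟨n + 1, by omega⟩ : Fin (n + 2))
  show A * (C * B) * (C * (A * B * C))⁻¹ = C⁻¹
  have hX : A * (C * B) = C⁻¹ * (C * (A * B * C)) := by
    rw [inv_mul_cancel_left, mul_comm C B, ← mul_assoc]
  rw [hX, mul_inv_cancel_right]

theorem aux_key (n : ℕ) (T : (Fin (n + 2) → G) → (Fin (n + 2) → G))
    (hT1 : ∀ c : Fin (n + 2) → G, ∀ i : Fin (n + 2), (i : ℕ) = 0 →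
      T c i = (c ⟨n + 1, by omega⟩ * ∏ j, c j)⁻¹)
    (hT2 : ∀ c : Fin (n + 2) → G, ∀ i : Fin (n + 2), 1 ≤ (i : ℕ) → (i : ℕ) ≤ n →
      T c i = c ⟨(i : ℕ) - 1, by omega⟩)
    (hT3 : ∀ c : Fin (n + 2) → G, ∀ i : Fin (n + 2), (i : ℕ) = n + 1 →
      T c i = c i * c ⟨n, by omega⟩) :
    ∀ k, 1 ≤ k → k ≤ n + 1 → ∀ c : Fin (n + 2) → G,
      (∀ i i' : Fin (n + 2), (i : ℕ) + 1 < k → (i' : ℕ) = n + 2 - k + (i : ℕ) →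
        T^[k] c i = (c i')⁻¹) ∧
      (∀ i : Fin (n + 2), (i : ℕ) + 1 = k →
        T^[k] c i = (c ⟨n + 1, by omega⟩ * ∏ j, c j)⁻¹) ∧
      (∀ i i' : Fin (n + 2), k ≤ (i : ℕ) → (i : ℕ) ≤ n → (i' : ℕ) = (i : ℕ) - k →
        T^[k] c i = c i') ∧
      (∀ i : Fin (n + 2), (i : ℕ) = n + 1 → T^[k] c i = auxQ n c k) ∧
      (∏ j, T^[k] c j = (auxQ n c (k - 1))⁻¹) := by
  intro k
  induction k with
  | zero => intro h; omega
  | succ k ih =>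
    intro _ hk2 c
    rcases Nat.eq_zero_or_pos k with hk0 | hkpos
    · subst hk0
      simp only [Nat.zero_add, Nat.add_sub_cancel]
      have q1 : auxQ n c 1 = c ⟨n + 1, by omega⟩ * c ⟨n, by omega⟩ := by
        have h := auxQ_succ n c 0 (by omega)
        rw [auxQ_zero] at h
        simpa using h
      refine ⟨?_, ?_, ?_, ?_, ?_⟩
      · intro i i' hi hi'; omega
      · intro i hi
        rw [Function.iterate_one]
        exact hT1 c i (by omega)
      · intro i i' hi1 hi2 hi'
        rw [Function.iterate_one, hT2 c i hi1 hi2]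
        exact congrArg c (Fin.ext (by simpa using hi'.symm))
      · intro i hi
        have hieq : i = (⟨n + 1, by omega⟩ : Fin (n + 2)) := Fin.ext hi
        rw [Function.iterate_one, hT3 c i hi, hieq, q1]
      · simp only [Function.iterate_one]
        rw [aux_prodT n T hT1 hT2 hT3 c, auxQ_zero]
    · obtain ⟨j, rfl⟩ : ∃ j, k = j + 1 := ⟨k - 1, by omega⟩
      obtain ⟨ih1, ih2, ih3, ih4, ih5⟩ := ih (by omega) (by omega) c
      set d := T^[j + 1] c with hdd
      simp only [Nat.add_sub_cancel] at ih5 ⊢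
      have hit : ∀ i : Fin (n + 2), T^[j + 1 + 1] c i = T d i := by
        intro i
        rw [Function.iterate_succ_apply']
      refine ⟨?_, ?_, ?_, ?_, ?_⟩
      · intro i i' hi hi'
        rw [hit i]
        by_cases h0 : (i : ℕ) = 0
        · rw [hT1 d i h0, ih4 ⟨n + 1, by omega⟩ rfl, ih5,
            auxQ_succ n c j (by omega), mul_comm (auxQ n c j), mul_inv_cancel_right]
          exact congrArg (·⁻¹) (congrArg c (Fin.ext (by simp only [Fin.val_mk]; omega)))
        · rw [hT2 d i (by omega) (by omega),
            ih1 ⟨(i : ℕ) - 1, by have := i.isLt; omega⟩ i'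
              (by show (i : ℕ) - 1 + 1 < j + 1; omega)
              (by show (i' : ℕ) = n + 2 - (j + 1) + ((i : ℕ) - 1); omega)]
      · intro i hi
        rw [hit i, hT2 d i (by omega) (by omega),
          ih2 ⟨(i : ℕ) - 1, by have := i.isLt; omega⟩ (by show (i : ℕ) - 1 + 1 = j + 1; omega)]
      · intro i i' hi1 hi2 hi'
        rw [hit i, hT2 d i (by omega) (by omega),
          ih3 ⟨(i : ℕ) - 1, by have := i.isLt; omega⟩ i'
            (by show j + 1 ≤ (i : ℕ) - 1; omega) (by show (i : ℕ) - 1 ≤ n; omega)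
            (by show (i' : ℕ) = (i : ℕ) - 1 - (j + 1); omega)]
      · intro i hi
        rw [hit i, hT3 d i hi, ih4 i hi,
          ih3 ⟨n, by omega⟩ ⟨n - (j + 1), by omega⟩ (by show j + 1 ≤ n; omega)
            (by show (n : ℕ) ≤ n; omega) rfl,
          auxQ_succ n c (j + 1) (by omega)]
      · simp only [Function.iterate_succ_apply' T (j + 1)]
        rw [aux_prodT n T hT1 hT2 hT3 d, ih4 ⟨n + 1, by omega⟩ rfl]

end Aux

/-- The computational core of Lemma 6.3.2: the map `T` encoding the action of the
cluster transformation `w = τ₁⋯τ_m` on the Casimirs `𝒞₁,…,𝒞_m` of the `𝒜₂ₘ`-quiver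
satisfies `(T^[m] c) i = (c i)⁻¹` for every `i`. Indices are 0-based: index `i`
here is index `i+1` of the paper. -/
theorem stmt_14 (G : Type*) [CommGroup G] (m : ℕ) (hm : 2 ≤ m)
    (T : (Fin m → G) → (Fin m → G))
    (hT1 : ∀ c : Fin m → G, ∀ i : Fin m, (i : ℕ) = 0 →
      T c i = (c ⟨m - 1, by omega⟩ * ∏ j, c j)⁻¹)
    (hT2 : ∀ c : Fin m → G, ∀ i : Fin m, 1 ≤ (i : ℕ) → (i : ℕ) ≤ m - 2 →
      T c i = c ⟨(i : ℕ) - 1, by omega⟩)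
    (hT3 : ∀ c : Fin m → G, ∀ i : Fin m, (i : ℕ) = m - 1 →
      T c i = c i * c ⟨m - 2, by omega⟩) :
    ∀ c : Fin m → G, ∀ i : Fin m, (T^[m]) c i = (c i)⁻¹ := by
  obtain ⟨n, rfl⟩ : ∃ n, m = n + 2 := ⟨m - 2, by omega⟩
  intro c i
  obtain ⟨K1, K2, K3, K4, K5⟩ :=
    aux_key n T hT1 hT2 hT3 (n + 1) (by omega) (by omega) c
  simp only [Nat.add_sub_cancel] at K5
  set d := T^[n + 1] c with hdd
  have hit : (T^[n + 2]) c i = T d i :=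
    congrFun (Function.iterate_succ_apply' T (n + 1) c) i
  rw [hit]
  have hilt := i.isLt
  by_cases h0 : (i : ℕ) = 0
  · rw [hT1 d i h0, K4 ⟨n + 2 - 1, by omega⟩ rfl, K5,
      show auxQ n c (n + 1) = auxQ n c n * c ⟨n - n, by omega⟩ from auxQ_succ n c n le_rfl,
      mul_comm (auxQ n c n), mul_inv_cancel_right]
    exact congrArg (·⁻¹) (congrArg c (Fin.ext (by simp only [Fin.val_mk]; omega)))
  · by_cases htop : (i : ℕ) = n + 1
    · rw [hT3 d i htop, K4 i htop,
        K2 ⟨n + 2 - 2, by omega⟩ (by show n + 2 - 2 + 1 = n + 1; omega), auxQ_top, mul_inv_rev,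
        mul_inv_cancel_left]
      exact congrArg (·⁻¹) (congrArg c (Fin.ext (by simp only [Fin.val_mk]; omega)))
    · rw [hT2 d i (by omega) (by omega),
        K1 ⟨(i : ℕ) - 1, by omega⟩ ⟨n + 2 - (n + 1) + ((i : ℕ) - 1), by omega⟩
          (by show (i : ℕ) - 1 + 1 < n + 1; omega) rfl]
      exact congrArg (·⁻¹) (congrArg c (Fin.ext (by simp only [Fin.val_mk]; omega)))
end
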